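/- Let X = (X₁,…,X_n) and Y = (Y₁,…,Y_n) be Markov chains on a common measurable space with kernels P and Q and invariant initial distributions π and ϖ (πP = π, ϖQ = ϖ). Then the laws μ_X, μ_Y of the full trajectories satisfy ‖μ_X − μ_Y‖_TV ≤ ‖π − ϖ‖_TV + 2(n−1)π(C^c) + (n−1) sup_{x∈C} ‖P(x,·) − Q(x,·)‖_TV for any measurable set C. -/

import Mathlib

open MeasureTheory ProbabilityTheory

/-- Total variation distance `‖μ − ν‖ = sup_{|f|≤1} |μ(f) − ν(f)| = 2 sup_A |μ(A) − ν(A)|`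
(as an `ℝ≥0∞`-valued quantity). -/
noncomputable def tvDist {α : Type*} [MeasurableSpace α] (μ ν : Measure α) : ENNReal :=
  2 * ⨆ (A : Set α) (_ : MeasurableSet A), ((μ A - ν A) + (ν A - μ A))

/-- The law of the Markov chain `(X₀,…,Xₙ)` with transition kernel `K` and initial
distribution `μ`. -/
noncomputable def chainLaw {E : Type*} [MeasurableSpace E] (K : Kernel E E)
    (μ : Measure E) : (n : ℕ) → Measure (Fin (n + 1) → E)
  | 0 => μ.map (fun x _ => x)
  | n + 1 => (chainLaw K μ n).bind
      (fun ω => ((K (ω (Fin.last n))).map (fun y => Fin.snoc ω y)))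

section Aux
variable {α : Type*} [MeasurableSpace α]

/-- One-sided total-variation-type supremum. -/
noncomputable def dLow (μ ν : Measure α) : ENNReal :=
  ⨆ (A : Set α) (_ : MeasurableSet A), (μ A - ν A)

lemma le_dLow {μ ν : Measure α} {A : Set α} (hA : MeasurableSet A) :
    μ A - ν A ≤ dLow μ ν :=
  le_iSup₂ (f := fun (A : Set α) (_ : MeasurableSet A) => μ A - ν A) A hA

lemma sub_compl_eq {μ ν : Measure α} [IsProbabilityMeasure μ] [IsProbabilityMeasure ν]
    {A : Set α} (hA : MeasurableSet A) : μ A - ν A = ν Aᶜ - μ Aᶜ := by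
  rw [prob_compl_eq_one_sub hA, prob_compl_eq_one_sub hA]
  rcases le_total (μ A) (ν A) with h | h
  · rw [tsub_eq_zero_of_le h, tsub_eq_zero_of_le (tsub_le_tsub_left h 1)]
  · have hμ1 : μ A ≤ 1 := prob_le_one
    have hne : (1 : ENNReal) - μ A ≠ ⊤ :=
      ne_top_of_le_ne_top ENNReal.one_ne_top tsub_le_self
    refine (ENNReal.sub_eq_of_eq_add hne ?_).symm
    rw [add_comm]
    exact (tsub_add_tsub_cancel hμ1 h).symm

lemma dLow_comm (μ ν : Measure α) [IsProbabilityMeasure μ] [IsProbabilityMeasure ν] :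
    dLow μ ν = dLow ν μ := by
  have key : ∀ (μ' ν' : Measure α), IsProbabilityMeasure μ' → IsProbabilityMeasure ν' →
      dLow μ' ν' ≤ dLow ν' μ' := by
    intro μ' ν' h1 h2
    refine iSup₂_le fun A hA => ?_
    rw [sub_compl_eq hA]
    exact le_dLow hA.compl
  exact le_antisymm (key μ ν ‹_› ‹_›) (key ν μ ‹_› ‹_›)

lemma tvDist_eq_two_dLow (μ ν : Measure α) [IsProbabilityMeasure μ] [IsProbabilityMeasure ν] :
    tvDist μ ν = 2 * dLow μ ν := by
  unfold tvDist dLow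
  congr 1
  refine le_antisymm (iSup₂_le fun A hA => ?_) (iSup₂_le fun A hA => ?_)
  · rcases le_total (μ A) (ν A) with h | h
    · rw [tsub_eq_zero_of_le h, zero_add, sub_compl_eq (μ := ν) (ν := μ) hA]
      exact le_dLow hA.compl
    · rw [tsub_eq_zero_of_le h, add_zero]
      exact le_dLow hA
  · exact le_trans le_self_add (le_iSup₂ (f := fun (A : Set α) (_ : MeasurableSet A) =>
      (μ A - ν A) + (ν A - μ A)) A hA)

lemma dLow_map_le {β : Type*} [MeasurableSpace β] (μ ν : Measure α) {f : α → β}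
    (hf : Measurable f) : dLow (μ.map f) (ν.map f) ≤ dLow μ ν := by
  refine iSup₂_le fun A hA => ?_
  rw [Measure.map_apply hf hA, Measure.map_apply hf hA]
  exact le_dLow (hf hA)

lemma lintegral_tsub_lintegral_le (μ : Measure α) {f g : α → ENNReal} (hg : Measurable g) :
    ∫⁻ a, f a ∂μ - ∫⁻ a, g a ∂μ ≤ ∫⁻ a, (f a - g a) ∂μ := by
  rw [tsub_le_iff_right, ← lintegral_add_right _ hg]
  exact lintegral_mono fun a => le_tsub_add

lemma lintegral_tsub_le_dLow (μ ν : Measure α) [SFinite ν] {h : α → ENNReal}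
    (hm : Measurable h) (h1 : ∀ a, h a ≤ 1) :
    ∫⁻ a, h a ∂μ - ∫⁻ a, h a ∂ν ≤ dLow μ ν := by
  set f : α → ℝ := fun a => (h a).toReal with hfdef
  have hfm : Measurable f := hm.ennreal_toReal
  have hne : ∀ a, h a ≠ ⊤ := fun a => ne_top_of_le_ne_top ENNReal.one_ne_top (h1 a)
  have hrepr : ∀ (ρ : Measure α), ∫⁻ a, h a ∂ρ = ∫⁻ t in Set.Ioi (0:ℝ), ρ {a | t < f a} := by
    intro ρ
    rw [← lintegral_eq_lintegral_meas_lt ρ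
      (Filter.Eventually.of_forall fun a => ENNReal.toReal_nonneg) hfm.aemeasurable]
    exact lintegral_congr fun a => (ENNReal.ofReal_toReal (hne a)).symm
  rw [hrepr μ, hrepr ν]
  have hgm : Measurable fun t : ℝ => ν {a | t < f a} := by
    have hs : MeasurableSet {p : ℝ × α | p.1 < f p.2} :=
      measurableSet_lt measurable_fst (hfm.comp measurable_snd)
    exact measurable_measure_prodMk_left hs
  refine le_trans (lintegral_tsub_lintegral_le _ hgm) ?_
  have hbound : ∀ t : ℝ, μ {a | t < f a} - ν {a | t < f a}
      ≤ (Set.Iio (1:ℝ)).indicator (fun _ => dLow μ ν) t := by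
    intro t
    by_cases ht : t < 1
    · rw [Set.indicator_of_mem (Set.mem_Iio.mpr ht)]
      exact le_dLow (hfm measurableSet_Ioi)
    · rw [Set.indicator_of_notMem (by simpa using ht)]
      have hempty : {a | t < f a} = ∅ := by
        ext a
        simp only [Set.mem_setOf_eq, Set.mem_empty_iff_false, iff_false, not_lt]
        refine le_trans ?_ (not_lt.mp ht)
        simpa using ENNReal.toReal_mono ENNReal.one_ne_top (h1 a)
      simp [hempty]
  calc ∫⁻ t in Set.Ioi (0:ℝ), (μ {a | t < f a} - ν {a | t < f a})
      ≤ ∫⁻ t in Set.Ioi (0:ℝ), (Set.Iio (1:ℝ)).indicator (fun _ => dLow μ ν) t :=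
        lintegral_mono fun t => hbound t
    _ = dLow μ ν := by
        rw [lintegral_indicator measurableSet_Iio, setLIntegral_const,
          Measure.restrict_apply measurableSet_Iio, Set.Iio_inter_Ioi]
        simp [Real.volume_Ioo]

end Aux

section Chain
variable {E : Type*} [MeasurableSpace E]

lemma measurable_snoc2 {n : ℕ} :
    Measurable (fun p : ((Fin (n+1) → E) × E) => (Fin.snoc p.1 p.2 : Fin (n+2) → E)) := by
  apply measurable_pi_lambda
  intro i
  refine Fin.lastCases ?_ ?_ i
  · simpa only [Fin.snoc_last] using measurable_snd
  · intro j
    simp only [Fin.snoc_castSucc]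
    exact (measurable_pi_apply j).comp measurable_fst

lemma measurable_snoc_sec {n : ℕ} (ω : Fin (n+1) → E) :
    Measurable (fun y : E => (Fin.snoc ω y : Fin (n+2) → E)) :=
  measurable_snoc2.comp measurable_prodMk_left

lemma measurable_section_measure (K : Kernel E E) [IsMarkovKernel K] {n : ℕ}
    {A : Set (Fin (n+2) → E)} (hA : MeasurableSet A) :
    Measurable (fun ω : Fin (n+1) → E =>
      K (ω (Fin.last n)) ((fun y => (Fin.snoc ω y : Fin (n+2) → E)) ⁻¹' A)) := by
  have h := Kernel.measurable_kernel_prodMk_left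
    (κ := K.comap (fun ω : Fin (n+1) → E => ω (Fin.last n)) (measurable_pi_apply _))
    ((measurable_snoc2 (E := E) (n := n)) hA)
  simp only [Kernel.comap_apply] at h
  exact h

lemma measurable_chainStep (K : Kernel E E) [IsMarkovKernel K] {n : ℕ} :
    Measurable (fun ω : Fin (n+1) → E =>
      ((K (ω (Fin.last n))).map (fun y => Fin.snoc ω y) : Measure (Fin (n+2) → E))) := by
  apply Measure.measurable_of_measurable_coe
  intro A hA
  simp_rw [Measure.map_apply (measurable_snoc_sec _) hA]
  exact measurable_section_measure K hA

lemma measurable_chainDiag : Measurable (fun (x : E) (_ : Fin 1) => x) :=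
  measurable_pi_lambda _ fun _ => measurable_id

instance chainLaw_prob (K : Kernel E E) [IsMarkovKernel K] (μ : Measure E)
    [IsProbabilityMeasure μ] (n : ℕ) : IsProbabilityMeasure (chainLaw K μ n) := by
  induction n with
  | zero => exact Measure.isProbabilityMeasure_map measurable_chainDiag.aemeasurable
  | succ n ih =>
    constructor
    rw [chainLaw, Measure.bind_apply MeasurableSet.univ (measurable_chainStep K).aemeasurable]
    have h1 : ∀ ω : Fin (n+1) → E,
        ((K (ω (Fin.last n))).map (fun y => (Fin.snoc ω y : Fin (n+2) → E))) Set.univ = 1 :=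
      fun ω => by
        rw [Measure.map_apply (measurable_snoc_sec _) MeasurableSet.univ]
        simp
    simp [h1]

lemma chainLaw_map_last (K : Kernel E E) [IsMarkovKernel K] (μ : Measure E)
    [IsProbabilityMeasure μ] (hinv : μ.bind (fun x => K x) = μ) (n : ℕ) :
    (chainLaw K μ n).map (fun ω => ω (Fin.last n)) = μ := by
  induction n with
  | zero =>
    rw [chainLaw, Measure.map_map (measurable_pi_apply _) measurable_chainDiag]
    exact Measure.map_id'
  | succ n ih =>
    ext A hA
    rw [Measure.map_apply (measurable_pi_apply _) hA, chainLaw,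
      Measure.bind_apply ((measurable_pi_apply (Fin.last (n+1))) hA) (measurable_chainStep K).aemeasurable]
    have h1 : ∀ ω : Fin (n+1) → E,
        ((K (ω (Fin.last n))).map (fun y => Fin.snoc ω y))
          ((fun ω' : Fin (n+2) → E => ω' (Fin.last (n+1))) ⁻¹' A) = K (ω (Fin.last n)) A := by
      intro ω
      rw [Measure.map_apply (measurable_snoc_sec _) ((measurable_pi_apply (Fin.last (n+1))) hA)]
      congr 1
      ext y
      simp [Fin.snoc_last]
    calc ∫⁻ ω, ((K (ω (Fin.last n))).map (fun y => Fin.snoc ω y))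
          ((fun ω' : Fin (n+2) → E => ω' (Fin.last (n+1))) ⁻¹' A) ∂(chainLaw K μ n)
        = ∫⁻ ω, K (ω (Fin.last n)) A ∂(chainLaw K μ n) := lintegral_congr h1
      _ = ∫⁻ x, K x A ∂((chainLaw K μ n).map (fun ω => ω (Fin.last n))) :=
          (lintegral_map (K.measurable_coe hA) (measurable_pi_apply _)).symm
      _ = ∫⁻ x, K x A ∂μ := by rw [ih]
      _ = (μ.bind (fun x => K x)) A := (Measure.bind_apply hA K.measurable.aemeasurable).symm
      _ = μ A := by rw [hinv]

variable {C : Set E}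

lemma kernel_diff_int (K L : Kernel E E) [IsMarkovKernel K] [IsMarkovKernel L] {n : ℕ}
    (ρ : Measure (Fin (n+1) → E)) [IsProbabilityMeasure ρ] {A : Set (Fin (n+2) → E)}
    (hA : MeasurableSet A) (hC : MeasurableSet C) :
    ∫⁻ ω, K (ω (Fin.last n)) ((fun y => (Fin.snoc ω y : Fin (n+2) → E)) ⁻¹' A) ∂ρ
      - ∫⁻ ω, L (ω (Fin.last n)) ((fun y => (Fin.snoc ω y : Fin (n+2) → E)) ⁻¹' A) ∂ρ
    ≤ (⨆ x, ⨆ _ : x ∈ C, dLow (K x) (L x)) + ρ {ω | ω (Fin.last n) ∈ Cᶜ} := by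
  set s := ⨆ x, ⨆ _ : x ∈ C, dLow (K x) (L x) with hs
  have hset : MeasurableSet {ω : Fin (n+1) → E | ω (Fin.last n) ∈ Cᶜ} :=
    (measurable_pi_apply (Fin.last n)) hC.compl
  refine le_trans (lintegral_tsub_lintegral_le ρ (measurable_section_measure L hA)) ?_
  have hpt : ∀ ω : Fin (n+1) → E,
      K (ω (Fin.last n)) ((fun y => (Fin.snoc ω y : Fin (n+2) → E)) ⁻¹' A)
        - L (ω (Fin.last n)) ((fun y => (Fin.snoc ω y : Fin (n+2) → E)) ⁻¹' A)
      ≤ s + ({ω : Fin (n+1) → E | ω (Fin.last n) ∈ Cᶜ}).indicator 1 ω := by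
    intro ω
    by_cases hω : ω (Fin.last n) ∈ C
    · refine le_add_right (le_trans (le_dLow ((measurable_snoc_sec ω) hA)) ?_)
      exact le_iSup₂ (f := fun x (_ : x ∈ C) => dLow (K x) (L x)) (ω (Fin.last n)) hω
    · have hmem : ω ∈ {ω : Fin (n+1) → E | ω (Fin.last n) ∈ Cᶜ} := hω
      rw [Set.indicator_of_mem hmem, Pi.one_apply]
      exact le_add_left (le_trans tsub_le_self prob_le_one)
  refine le_trans (lintegral_mono hpt) ?_
  rw [lintegral_add_left measurable_const, lintegral_const, measure_univ, mul_one,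
    lintegral_indicator_one hset]

lemma step_v1 (K L : Kernel E E) [IsMarkovKernel K] [IsMarkovKernel L] {n : ℕ}
    (μ ν : Measure (Fin (n+1) → E)) [IsProbabilityMeasure μ] [IsProbabilityMeasure ν]
    (hC : MeasurableSet C) :
    dLow (μ.bind (fun ω => ((K (ω (Fin.last n))).map (fun y => (Fin.snoc ω y : Fin (n+2) → E)))))
        (ν.bind (fun ω => ((L (ω (Fin.last n))).map (fun y => (Fin.snoc ω y : Fin (n+2) → E)))))
      ≤ dLow μ ν + ν {ω | ω (Fin.last n) ∈ Cᶜ}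
        + ⨆ x, ⨆ _ : x ∈ C, dLow (K x) (L x) := by
  refine iSup₂_le fun A hA => ?_
  rw [Measure.bind_apply hA (measurable_chainStep K).aemeasurable, Measure.bind_apply hA (measurable_chainStep L).aemeasurable]
  simp_rw [Measure.map_apply (measurable_snoc_sec _) hA]
  calc ∫⁻ ω, K (ω (Fin.last n)) ((fun y => (Fin.snoc ω y : Fin (n+2) → E)) ⁻¹' A) ∂μ
        - ∫⁻ ω, L (ω (Fin.last n)) ((fun y => (Fin.snoc ω y : Fin (n+2) → E)) ⁻¹' A) ∂ν
      ≤ (∫⁻ ω, K (ω (Fin.last n)) ((fun y => (Fin.snoc ω y : Fin (n+2) → E)) ⁻¹' A) ∂μ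
          - ∫⁻ ω, K (ω (Fin.last n)) ((fun y => (Fin.snoc ω y : Fin (n+2) → E)) ⁻¹' A) ∂ν)
        + (∫⁻ ω, K (ω (Fin.last n)) ((fun y => (Fin.snoc ω y : Fin (n+2) → E)) ⁻¹' A) ∂ν
          - ∫⁻ ω, L (ω (Fin.last n)) ((fun y => (Fin.snoc ω y : Fin (n+2) → E)) ⁻¹' A) ∂ν) :=
        tsub_le_tsub_add_tsub
    _ ≤ dLow μ ν + ((⨆ x, ⨆ _ : x ∈ C, dLow (K x) (L x)) + ν {ω | ω (Fin.last n) ∈ Cᶜ}) :=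
        add_le_add
          (lintegral_tsub_le_dLow μ ν (measurable_section_measure K hA) fun ω => prob_le_one)
          (kernel_diff_int K L ν hA hC)
    _ = dLow μ ν + ν {ω | ω (Fin.last n) ∈ Cᶜ} + ⨆ x, ⨆ _ : x ∈ C, dLow (K x) (L x) := by
        ring

lemma step_v2 (K L : Kernel E E) [IsMarkovKernel K] [IsMarkovKernel L] {n : ℕ}
    (μ ν : Measure (Fin (n+1) → E)) [IsProbabilityMeasure μ] [IsProbabilityMeasure ν]
    (hC : MeasurableSet C) :
    dLow (μ.bind (fun ω => ((K (ω (Fin.last n))).map (fun y => (Fin.snoc ω y : Fin (n+2) → E)))))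
        (ν.bind (fun ω => ((L (ω (Fin.last n))).map (fun y => (Fin.snoc ω y : Fin (n+2) → E)))))
      ≤ dLow μ ν + μ {ω | ω (Fin.last n) ∈ Cᶜ}
        + ⨆ x, ⨆ _ : x ∈ C, dLow (K x) (L x) := by
  refine iSup₂_le fun A hA => ?_
  rw [Measure.bind_apply hA (measurable_chainStep K).aemeasurable, Measure.bind_apply hA (measurable_chainStep L).aemeasurable]
  simp_rw [Measure.map_apply (measurable_snoc_sec _) hA]
  calc ∫⁻ ω, K (ω (Fin.last n)) ((fun y => (Fin.snoc ω y : Fin (n+2) → E)) ⁻¹' A) ∂μ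
        - ∫⁻ ω, L (ω (Fin.last n)) ((fun y => (Fin.snoc ω y : Fin (n+2) → E)) ⁻¹' A) ∂ν
      ≤ (∫⁻ ω, K (ω (Fin.last n)) ((fun y => (Fin.snoc ω y : Fin (n+2) → E)) ⁻¹' A) ∂μ
          - ∫⁻ ω, L (ω (Fin.last n)) ((fun y => (Fin.snoc ω y : Fin (n+2) → E)) ⁻¹' A) ∂μ)
        + (∫⁻ ω, L (ω (Fin.last n)) ((fun y => (Fin.snoc ω y : Fin (n+2) → E)) ⁻¹' A) ∂μ
          - ∫⁻ ω, L (ω (Fin.last n)) ((fun y => (Fin.snoc ω y : Fin (n+2) → E)) ⁻¹' A) ∂ν) :=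
        tsub_le_tsub_add_tsub
    _ ≤ ((⨆ x, ⨆ _ : x ∈ C, dLow (K x) (L x)) + μ {ω | ω (Fin.last n) ∈ Cᶜ}) + dLow μ ν :=
        add_le_add
          (kernel_diff_int K L μ hA hC)
          (lintegral_tsub_le_dLow μ ν (measurable_section_measure L hA) fun ω => prob_le_one)
    _ = dLow μ ν + μ {ω | ω (Fin.last n) ∈ Cᶜ} + ⨆ x, ⨆ _ : x ∈ C, dLow (K x) (L x) := by
        ring

end Chain

/-- Coupling bound: if `X` and `Y` are Markov chains of length `n+1` with kernels
`P`, `Q` and invariant initial distributions `π`, `ϖ` (i.e. `πP = π`, `ϖQ = ϖ`),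
then the laws `μ_X`, `μ_Y` of the trajectories satisfy, for any measurable `C`,
`‖μ_X − μ_Y‖ ≤ ‖π − ϖ‖ + 2n·π(Cᶜ) + n·sup_{x∈C} ‖P(x,·) − Q(x,·)‖`. -/
theorem stmt_15 {E : Type*} [MeasurableSpace E]
    (P Q : Kernel E E) [IsMarkovKernel P] [IsMarkovKernel Q]
    (π ϖ : Measure E) [IsProbabilityMeasure π] [IsProbabilityMeasure ϖ]
    (hπ : π.bind (fun x => P x) = π) (hϖ : ϖ.bind (fun x => Q x) = ϖ)
    (C : Set E) (hC : MeasurableSet C) (n : ℕ) :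
    tvDist (chainLaw P π n) (chainLaw Q ϖ n)
      ≤ tvDist π ϖ + 2 * n * π Cᶜ
        + n * ⨆ (x : E) (_ : x ∈ C), tvDist (P x) (Q x) := by
  set s₁ := ⨆ x, ⨆ _ : x ∈ C, dLow (P x) (Q x) with hs₁
  set s₂ := ⨆ x, ⨆ _ : x ∈ C, dLow (Q x) (P x) with hs₂
  have hmarg : ∀ m : ℕ, (chainLaw P π m) {ω | ω (Fin.last m) ∈ Cᶜ} = π Cᶜ := by
    intro m
    have h := Measure.map_apply (μ := chainLaw P π m)
      (measurable_pi_apply (Fin.last m)) hC.compl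
    rw [chainLaw_map_last P π hπ m] at h
    exact h.symm
  have h1 : ∀ m : ℕ, dLow (chainLaw P π m) (chainLaw Q ϖ m)
      ≤ dLow π ϖ + m * (π Cᶜ + s₁) := by
    intro m
    induction m with
    | zero =>
      simp only [Nat.cast_zero, zero_mul, add_zero]
      exact dLow_map_le π ϖ measurable_chainDiag
    | succ m ih =>
      refine le_trans (step_v2 P Q (chainLaw P π m) (chainLaw Q ϖ m) hC) ?_
      rw [hmarg m]
      calc dLow (chainLaw P π m) (chainLaw Q ϖ m) + π Cᶜ + s₁
          ≤ (dLow π ϖ + m * (π Cᶜ + s₁)) + π Cᶜ + s₁ :=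
            add_le_add (add_le_add ih le_rfl) le_rfl
        _ = dLow π ϖ + (↑(m + 1) : ENNReal) * (π Cᶜ + s₁) := by push_cast; ring
  have h2 : ∀ m : ℕ, dLow (chainLaw Q ϖ m) (chainLaw P π m)
      ≤ dLow ϖ π + m * (π Cᶜ + s₂) := by
    intro m
    induction m with
    | zero =>
      simp only [Nat.cast_zero, zero_mul, add_zero]
      exact dLow_map_le ϖ π measurable_chainDiag
    | succ m ih =>
      refine le_trans (step_v1 Q P (chainLaw Q ϖ m) (chainLaw P π m) hC) ?_
      rw [hmarg m]
      calc dLow (chainLaw Q ϖ m) (chainLaw P π m) + π Cᶜ + s₂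
          ≤ (dLow ϖ π + m * (π Cᶜ + s₂)) + π Cᶜ + s₂ :=
            add_le_add (add_le_add ih le_rfl) le_rfl
        _ = dLow ϖ π + (↑(m + 1) : ENNReal) * (π Cᶜ + s₂) := by push_cast; ring
  have hs₂₁ : s₂ = s₁ := by
    rw [hs₁, hs₂]
    exact iSup_congr fun x => iSup_congr fun _ => dLow_comm (Q x) (P x)
  have hsup : (⨆ (x : E) (_ : x ∈ C), tvDist (P x) (Q x)) = 2 * s₁ := by
    rw [hs₁]
    simp_rw [tvDist_eq_two_dLow, ENNReal.mul_iSup]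
  have htv : tvDist π ϖ = dLow π ϖ + dLow ϖ π := by
    rw [tvDist_eq_two_dLow, dLow_comm π ϖ, two_mul, dLow_comm ϖ π]
  rw [tvDist_eq_two_dLow, two_mul]
  calc dLow (chainLaw P π n) (chainLaw Q ϖ n) + dLow (chainLaw P π n) (chainLaw Q ϖ n)
      = dLow (chainLaw P π n) (chainLaw Q ϖ n) + dLow (chainLaw Q ϖ n) (chainLaw P π n) := by
        rw [dLow_comm (chainLaw P π n) (chainLaw Q ϖ n)]
    _ ≤ (dLow π ϖ + n * (π Cᶜ + s₁)) + (dLow ϖ π + n * (π Cᶜ + s₂)) := add_le_add (h1 n) (h2 n)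
    _ = (dLow π ϖ + dLow ϖ π) + 2 * n * π Cᶜ + n * (2 * s₁) := by rw [hs₂₁]; push_cast; ring
    _ = tvDist π ϖ + 2 * n * π Cᶜ + n * ⨆ (x : E) (_ : x ∈ C), tvDist (P x) (Q x) := by
        rw [htv, hsup]
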